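/- In a cartesian bicategory of relations, a morphism R : X ⟶ Y is an isomorphism if and only if R† is a two-sided inverse of R (i.e. R ; R† = id_X and R† ; R = id_Y); in particular, if R is an isomorphism then R⁻¹ = R†. -/

import Mathlib

open CategoryTheory MonoidalCategory

universe v u

/-- A cartesian bicategory of relations: a poset-enriched symmetric monoidal category
in which every object carries a cocommutative comonoid `(dup, del)` and a commutative
monoid `(mrg, bng)`, compatible with the monoidal structure, satisfying the adjunction
inequalities and the Frobenius law, and such that every morphism is a lax comonoid
homomorphism. -/
class CartesianBicatRel (C : Type u) [Category.{v} C] [MonoidalCategory C]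
    [SymmetricCategory C] [∀ X Y : C, PartialOrder (X ⟶ Y)] where
  comp_mono : ∀ {X Y Z : C} {f f' : X ⟶ Y} {g g' : Y ⟶ Z},
    f ≤ f' → g ≤ g' → f ≫ g ≤ f' ≫ g'
  tensor_mono : ∀ {X X' Y Y' : C} {f f' : X ⟶ X'} {g g' : Y ⟶ Y'},
    f ≤ f' → g ≤ g' → (f ⊗ₘ g) ≤ (f' ⊗ₘ g')
  /-- comultiplication Δ -/
  dup : ∀ X : C, X ⟶ X ⊗ X
  /-- counit ! -/
  del : ∀ X : C, X ⟶ 𝟙_ C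
  /-- multiplication ∇ -/
  mrg : ∀ X : C, X ⊗ X ⟶ X
  /-- unit ? -/
  bng : ∀ X : C, 𝟙_ C ⟶ X
  dup_coassoc : ∀ X : C, dup X ≫ (dup X ▷ X) ≫ (α_ X X X).hom = dup X ≫ (X ◁ dup X)
  dup_del_left : ∀ X : C, dup X ≫ (del X ▷ X) = (λ_ X).inv
  dup_del_right : ∀ X : C, dup X ≫ (X ◁ del X) = (ρ_ X).inv
  dup_cocomm : ∀ X : C, dup X ≫ (β_ X X).hom = dup X
  mrg_assoc : ∀ X : C, (mrg X ▷ X) ≫ mrg X = (α_ X X X).hom ≫ (X ◁ mrg X) ≫ mrg X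
  mrg_bng_left : ∀ X : C, (bng X ▷ X) ≫ mrg X = (λ_ X).hom
  mrg_bng_right : ∀ X : C, (X ◁ bng X) ≫ mrg X = (ρ_ X).hom
  mrg_comm : ∀ X : C, (β_ X X).hom ≫ mrg X = mrg X
  dup_tensor : ∀ X Y : C, dup (X ⊗ Y) = (dup X ⊗ₘ dup Y) ≫ tensorμ X X Y Y
  del_tensor : ∀ X Y : C, del (X ⊗ Y) = (del X ⊗ₘ del Y) ≫ (λ_ (𝟙_ C)).hom
  dup_unitObj : dup (𝟙_ C) = (λ_ (𝟙_ C)).inv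
  del_unitObj : del (𝟙_ C) = 𝟙 (𝟙_ C)
  mrg_tensor : ∀ X Y : C, mrg (X ⊗ Y) = tensorμ X Y X Y ≫ (mrg X ⊗ₘ mrg Y)
  bng_tensor : ∀ X Y : C, bng (X ⊗ Y) = (λ_ (𝟙_ C)).inv ≫ (bng X ⊗ₘ bng Y)
  mrg_unitObj : mrg (𝟙_ C) = (λ_ (𝟙_ C)).hom
  bng_unitObj : bng (𝟙_ C) = 𝟙 (𝟙_ C)
  adj_dup_unit : ∀ X : C, 𝟙 X ≤ dup X ≫ mrg X
  adj_dup_counit : ∀ X : C, mrg X ≫ dup X ≤ 𝟙 (X ⊗ X)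
  adj_del_counit : ∀ X : C, bng X ≫ del X ≤ 𝟙 (𝟙_ C)
  adj_del_unit : ∀ X : C, 𝟙 X ≤ del X ≫ bng X
  frob_left : ∀ X : C, (dup X ▷ X) ≫ (α_ X X X).hom ≫ (X ◁ mrg X) = mrg X ≫ dup X
  frob_right : ∀ X : C, (X ◁ dup X) ≫ (α_ X X X).inv ≫ (mrg X ▷ X) = mrg X ≫ dup X
  lax_dup : ∀ {X Y : C} (R : X ⟶ Y), R ≫ dup Y ≤ dup X ≫ (R ⊗ₘ R)
  lax_del : ∀ {X Y : C} (R : X ⟶ Y), R ≫ del Y ≤ del X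

namespace CartesianBicatRel

variable {C : Type u} [Category.{v} C] [MonoidalCategory C] [SymmetricCategory C]
  [∀ X Y : C, PartialOrder (X ⟶ Y)] [CartesianBicatRel C]

/-- The dagger `R† : Y ⟶ X` of `R : X ⟶ Y`, built from the cup `η_X = ?;Δ` and
the cap `ε_Y = ∇;!`. -/
def dagger {X Y : C} (R : X ⟶ Y) : Y ⟶ X :=
  (λ_ Y).inv ≫ ((bng X ≫ dup X) ▷ Y) ≫ (α_ X X Y).hom ≫
    (X ◁ (R ▷ Y)) ≫ (X ◁ (mrg Y ≫ del Y)) ≫ (ρ_ X).hom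

/-- `R` is single-valued. -/
def SingleValued {X Y : C} (R : X ⟶ Y) : Prop := dup X ≫ (R ⊗ₘ R) ≤ R ≫ dup Y

/-- `R` is total. -/
def Total {X Y : C} (R : X ⟶ Y) : Prop := del X ≤ R ≫ del Y

/-- `R` is injective. -/
def Injective {X Y : C} (R : X ⟶ Y) : Prop := (R ⊗ₘ R) ≫ mrg Y ≤ mrg X ≫ R

/-- `R` is surjective. -/
def Surjective {X Y : C} (R : X ⟶ Y) : Prop := bng Y ≤ bng X ≫ R

/-- A map is a single-valued and total morphism. -/
def IsMap {X Y : C} (R : X ⟶ Y) : Prop := SingleValued R ∧ Total R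

/-- A comap is an injective and surjective morphism. -/
def IsComap {X Y : C} (R : X ⟶ Y) : Prop := Injective R ∧ Surjective R

end CartesianBicatRel

/-! For a map `R` (single-valued and total), the lax comonoid laws for `R` and the lax monoid
laws they imply make `R` left adjoint to `R†`: `𝟙 ≤ R ≫ R†` and `R† ≫ R ≤ 𝟙`. An isomorphism is
a map, because the lax comonoid laws for `R⁻¹` transport back to `R`; and in a poset-enriched
category a left adjoint that is invertible has its right adjoint as inverse. -/

namespace CartesianBicatRel

variable {C : Type u} [Category.{v} C] [MonoidalCategory C] [SymmetricCategory C]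
  [∀ X Y : C, PartialOrder (X ⟶ Y)] [CartesianBicatRel C]

lemma whiskerLeft_mono (Z : C) {X Y : C} {f f' : X ⟶ Y} (h : f ≤ f') : Z ◁ f ≤ Z ◁ f' := by
  simpa only [id_tensorHom] using tensor_mono (le_refl (𝟙 Z)) h

lemma whiskerRight_mono {X Y : C} {f f' : X ⟶ Y} (h : f ≤ f') (Z : C) : f ▷ Z ≤ f' ▷ Z := by
  simpa only [tensorHom_id] using tensor_mono h (le_refl (𝟙 Z))

/-- The lax comonoid laws dualise, through the adjunctions `Δ ⊣ ∇` and `! ⊣ ?`, to lax monoid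
laws. -/
lemma mrg_comp_le {X Y : C} (R : X ⟶ Y) : mrg X ≫ R ≤ (R ⊗ₘ R) ≫ mrg Y :=
  calc mrg X ≫ R = mrg X ≫ R ≫ 𝟙 Y := by rw [Category.comp_id]
    _ ≤ mrg X ≫ (R ≫ dup Y) ≫ mrg Y := by
      simpa only [Category.assoc] using comp_mono le_rfl (comp_mono le_rfl (adj_dup_unit Y))
    _ ≤ mrg X ≫ (dup X ≫ (R ⊗ₘ R)) ≫ mrg Y := comp_mono le_rfl (comp_mono (lax_dup R) le_rfl)
    _ = (mrg X ≫ dup X) ≫ (R ⊗ₘ R) ≫ mrg Y := by simp only [Category.assoc]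
    _ ≤ 𝟙 (X ⊗ X) ≫ (R ⊗ₘ R) ≫ mrg Y := comp_mono (adj_dup_counit X) le_rfl
    _ = (R ⊗ₘ R) ≫ mrg Y := Category.id_comp _

lemma bng_comp_le {X Y : C} (R : X ⟶ Y) : bng X ≫ R ≤ bng Y :=
  calc bng X ≫ R = bng X ≫ R ≫ 𝟙 Y := by rw [Category.comp_id]
    _ ≤ bng X ≫ (R ≫ del Y) ≫ bng Y := by
      simpa only [Category.assoc] using comp_mono le_rfl (comp_mono le_rfl (adj_del_unit Y))
    _ ≤ bng X ≫ del X ≫ bng Y := comp_mono le_rfl (comp_mono (lax_del R) le_rfl)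
    _ = (bng X ≫ del X) ≫ bng Y := (Category.assoc _ _ _).symm
    _ ≤ 𝟙 (𝟙_ C) ≫ bng Y := comp_mono (adj_del_counit X) le_rfl
    _ = bng Y := Category.id_comp _

/-- The only use of the Frobenius law. -/
lemma cup_whiskerRight_mrg (X : C) :
    (λ_ X).inv ≫ ((bng X ≫ dup X) ▷ X) ≫ (α_ X X X).hom ≫ (X ◁ mrg X) = dup X := by
  rw [comp_whiskerRight]
  slice_lhs 3 5 => rw [frob_left]
  slice_lhs 2 3 => rw [mrg_bng_left]
  simp

lemma comp_dagger {X Y : C} (R : X ⟶ Y) :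
    R ≫ dagger R = (λ_ X).inv ≫ ((bng X ≫ dup X) ▷ X) ≫ (α_ X X X).hom ≫
      (X ◁ ((R ⊗ₘ R) ≫ mrg Y ≫ del Y)) ≫ (ρ_ X).hom := by
  rw [dagger, ← Category.assoc, leftUnitor_inv_naturality]
  slice_lhs 2 3 => rw [whisker_exchange]
  slice_lhs 3 4 => rw [associator_naturality_right]
  simp only [Category.assoc, MonoidalCategory.whiskerLeft_comp]
  rw [← MonoidalCategory.whiskerLeft_comp_assoc, ← tensorHom_def']

lemma dagger_comp {X Y : C} (R : X ⟶ Y) :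
    dagger R ≫ R = (λ_ Y).inv ≫ ((bng X ≫ dup X ≫ (R ⊗ₘ R)) ▷ Y) ≫ (α_ Y Y Y).hom ≫
      (Y ◁ (mrg Y ≫ del Y)) ≫ (ρ_ Y).hom := by
  simp only [dagger, Category.assoc, MonoidalCategory.whiskerLeft_comp]
  rw [← rightUnitor_naturality]
  slice_lhs 6 7 => rw [whisker_exchange]
  slice_lhs 5 6 => rw [whisker_exchange]
  slice_lhs 4 5 => rw [whisker_exchange]
  slice_lhs 3 4 => rw [← associator_naturality_left]
  slice_lhs 4 5 => rw [← associator_naturality_middle]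
  rw [MonoidalCategory.tensorHom_def]
  simp only [comp_whiskerRight, Category.assoc]

lemma Total.id_le_comp_dagger {X Y : C} {R : X ⟶ Y} (hR : Total R) : 𝟙 X ≤ R ≫ dagger R :=
  calc 𝟙 X = dup X ≫ (X ◁ del X) ≫ (ρ_ X).hom := by rw [← Category.assoc, dup_del_right]; simp
    _ ≤ dup X ≫ (X ◁ (R ≫ del Y)) ≫ (ρ_ X).hom :=
      comp_mono le_rfl (comp_mono (whiskerLeft_mono X hR) le_rfl)
    _ = (λ_ X).inv ≫ ((bng X ≫ dup X) ▷ X) ≫ (α_ X X X).hom ≫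
          (X ◁ (mrg X ≫ R ≫ del Y)) ≫ (ρ_ X).hom := by
      conv_lhs => rw [← cup_whiskerRight_mrg X]
      simp only [Category.assoc, MonoidalCategory.whiskerLeft_comp]
    _ ≤ R ≫ dagger R := by
      rw [comp_dagger]
      refine comp_mono le_rfl (comp_mono le_rfl (comp_mono le_rfl (comp_mono ?_ le_rfl)))
      refine whiskerLeft_mono X ?_
      simpa only [Category.assoc] using comp_mono (mrg_comp_le R) (le_refl (del Y))

lemma SingleValued.dagger_comp_le {X Y : C} {R : X ⟶ Y} (hR : SingleValued R) :
    dagger R ≫ R ≤ 𝟙 Y := by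
  have cup_le : bng X ≫ dup X ≫ (R ⊗ₘ R) ≤ bng Y ≫ dup Y :=
    calc bng X ≫ dup X ≫ (R ⊗ₘ R) ≤ bng X ≫ R ≫ dup Y := comp_mono le_rfl hR
      _ = (bng X ≫ R) ≫ dup Y := (Category.assoc _ _ _).symm
      _ ≤ bng Y ≫ dup Y := comp_mono (bng_comp_le R) le_rfl
  calc dagger R ≫ R
      ≤ (λ_ Y).inv ≫ ((bng Y ≫ dup Y) ▷ Y) ≫ (α_ Y Y Y).hom ≫
          (Y ◁ (mrg Y ≫ del Y)) ≫ (ρ_ Y).hom := by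
        rw [dagger_comp]
        exact comp_mono le_rfl (comp_mono (whiskerRight_mono cup_le Y) le_rfl)
    _ = 𝟙 Y := by
      simp only [MonoidalCategory.whiskerLeft_comp, Category.assoc]
      slice_lhs 1 4 => rw [cup_whiskerRight_mrg Y]
      slice_lhs 1 2 => rw [dup_del_right]
      simp

lemma isMap_of_isIso {X Y : C} (R : X ⟶ Y) [IsIso R] : IsMap R := by
  constructor
  · calc dup X ≫ (R ⊗ₘ R) = R ≫ (inv R ≫ dup X) ≫ (R ⊗ₘ R) := by simp
      _ ≤ R ≫ (dup Y ≫ (inv R ⊗ₘ inv R)) ≫ (R ⊗ₘ R) :=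
        comp_mono le_rfl (comp_mono (lax_dup (inv R)) le_rfl)
      _ = R ≫ dup Y := by simp [tensorHom_comp_tensorHom]
  · calc del X = R ≫ inv R ≫ del X := by simp
      _ ≤ R ≫ del Y := comp_mono le_rfl (lax_del (inv R))

lemma dagger_eq_inv {X Y : C} (R : X ⟶ Y) [IsIso R] : dagger R = inv R := by
  obtain ⟨hSV, hT⟩ := isMap_of_isIso R
  apply le_antisymm
  · simpa using comp_mono hSV.dagger_comp_le (le_refl (inv R))
  · simpa using comp_mono (le_refl (inv R)) hT.id_le_comp_dagger

end CartesianBicatRel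

open CartesianBicatRel in
/-- `R` is an isomorphism iff `R†` is a two-sided inverse of `R`; in particular the inverse
of an isomorphism is its dagger. -/
theorem iso_iff_dagger_inverse {C : Type u} [Category.{v} C] [MonoidalCategory C]
    [SymmetricCategory C] [∀ X Y : C, PartialOrder (X ⟶ Y)] [CartesianBicatRel C]
    {X Y : C} (R : X ⟶ Y) :
    (IsIso R ↔ (R ≫ dagger R = 𝟙 X ∧ dagger R ≫ R = 𝟙 Y)) ∧
    (∀ _ : IsIso R, inv R = dagger R) := by
  refine ⟨⟨fun _ => ?_, fun ⟨hRD, hDR⟩ => ⟨dagger R, hRD, hDR⟩⟩,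
    fun _ => (dagger_eq_inv R).symm⟩
  rw [dagger_eq_inv]
  exact ⟨IsIso.hom_inv_id R, IsIso.inv_hom_id R⟩
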